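/- Let α > 0 and f : [1,∞) → ℝ be non-decreasing, unbounded, continuous, with f(1) > 0, and let w(i,j) = i^{-α} f(j/i). Then there exists q > 1 minimizing g(t) = t^α f(t)/(t^α - 1) over t > 1, and for every increasing real sequence P = (1 = a_0, a_1, a_2, ...), the total weight w(P) = Σ_{k=0}^∞ a_k^{-α} f(a_{k+1}/a_k) satisfies w(P) ≥ q^α f(q)/(q^α - 1), with equality for the geometric sequence P = (1, q, q², q³, ...). -/

import Mathlib

/-!
Let `g(t) = t^α f(t) / (t^α - 1)`. It is continuous on `(1, ∞)` and tends to `+∞` at both ends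
(it is at least `f(1) / (t^α - 1)` near `1` and at least `f(t)` near `∞`), so it attains its
minimum `m = g(q)`. Since `g(t) (1 - t^(-α)) = f(t)`, minimality says `m (1 - t^(-α)) ≤ f(t)` for
`t ≥ 1`; applied to `t = a_{k+1}/a_k` this bounds each step below by `m (a_k^(-α) - a_{k+1}^(-α))`,
and the sum telescopes to at least `m (1 - a_N^(-α)) → m` when the path is unbounded. A bounded
path has infinite weight, every step costing at least `(sup a)^(-α) f(1)`. Along the geometric
path with ratio `q` the weights form a geometric series with sum `g(q)`.
-/

open Real

open Filter Set Topology

theorem ContinuousOn.exists_isMinOn_Ioi {g : ℝ → ℝ} {a : ℝ} (hg : ContinuousOn g (Ioi a))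
    (hleft : Tendsto g (𝓝[>] a) atTop) (hright : Tendsto g atTop atTop) :
    ∃ q ∈ Ioi a, IsMinOn g (Ioi a) q := by
  set t₀ := a + 1
  have ht₀ : a < t₀ := lt_add_one a
  obtain ⟨l, hal, hl⟩ := (nhdsGT_basis a).eventually_iff.1 <|
    hleft.eventually (eventually_ge_atTop (g t₀))
  obtain ⟨T, hT⟩ := eventually_atTop.1 <| hright.eventually (eventually_ge_atTop (g t₀))
  have hK : Icc (min l t₀) (max T t₀) ⊆ Ioi a := fun t ht => lt_of_lt_of_le (lt_min hal ht₀) ht.1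
  obtain ⟨q, hqK, hq⟩ := isCompact_Icc.exists_isMinOn ⟨t₀, min_le_right _ _, le_max_right _ _⟩
    (hg.mono hK)
  refine ⟨q, hK hqK, fun t (ht : a < t) => ?_⟩
  have hqt₀ : g q ≤ g t₀ := hq ⟨min_le_right _ _, le_max_right _ _⟩
  rcases lt_or_ge t (min l t₀) with htl | htl
  · exact hqt₀.trans (hl ⟨ht, htl.trans_le (min_le_left _ _)⟩)
  rcases le_or_gt t (max T t₀) with htT | htT
  · exact hq ⟨htl, htT⟩
  · exact hqt₀.trans (hT t ((le_max_left _ _).trans htT.le))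

noncomputable def geomWeight (α : ℝ) (f : ℝ → ℝ) (t : ℝ) : ℝ := t ^ α * f t / (t ^ α - 1)

/-- The paper's `w(i, j)`; `pathWeight α f a` is `w(P)` for the path `P = (a 0, a 1, …)`. -/
noncomputable def edgeWeight (α : ℝ) (f : ℝ → ℝ) (i j : ℝ) : ℝ := i ^ (-α) * f (j / i)

noncomputable def pathWeight (α : ℝ) (f : ℝ → ℝ) (a : ℕ → ℝ) : ENNReal :=
  ∑' k, ENNReal.ofReal (edgeWeight α f (a k) (a (k + 1)))

section

variable {α : ℝ} {f : ℝ → ℝ}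

lemma geomWeight_mul_one_sub_rpow_neg (hα : 0 < α) {t : ℝ} (ht : 1 < t) :
    geomWeight α f t * (1 - t ^ (-α)) = f t := by
  have htα : 1 < t ^ α := one_lt_rpow ht hα
  have hinv : t ^ (-α) = (t ^ α)⁻¹ := rpow_neg (by linarith) α
  rw [geomWeight, hinv]
  field_simp [show t ^ α - 1 ≠ 0 by linarith]

lemma continuousOn_geomWeight (hα : 0 < α) (hcont : ContinuousOn f (Ici 1)) :
    ContinuousOn (geomWeight α f) (Ioi 1) := by
  have hpow : ContinuousOn (fun t : ℝ => t ^ α) (Ioi 1) := fun t ht =>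
    (continuousAt_rpow_const t α (Or.inl (by linarith [mem_Ioi.1 ht]))).continuousWithinAt
  exact (hpow.mul (hcont.mono Ioi_subset_Ici_self)).div (hpow.sub continuousOn_const)
    fun t ht => (sub_pos.2 (one_lt_rpow (mem_Ioi.1 ht) hα)).ne'

lemma tendsto_geomWeight_nhdsGT_one (hα : 0 < α) (hmono : MonotoneOn f (Ici 1)) (hf1 : 0 < f 1) :
    Tendsto (geomWeight α f) (𝓝[>] 1) atTop := by
  have hden : Tendsto (fun t : ℝ => t ^ α - 1) (𝓝[>] 1) (𝓝[>] 0) := by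
    refine tendsto_nhdsWithin_of_tendsto_nhds_of_eventually_within _ ?_ ?_
    · have h : Tendsto (fun t : ℝ => t ^ α - 1) (𝓝 1) (𝓝 (1 ^ α - 1)) :=
        ((continuousAt_rpow_const 1 α (Or.inl one_ne_zero)).sub continuousAt_const).tendsto
      simpa using h.mono_left nhdsWithin_le_nhds
    · filter_upwards [self_mem_nhdsWithin] with t ht using sub_pos.2 (one_lt_rpow ht hα)
  refine tendsto_atTop_mono' _ ?_ ((tendsto_inv_nhdsGT_zero.comp hden).const_mul_atTop hf1)
  filter_upwards [self_mem_nhdsWithin] with t (ht : 1 < t)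
  have htα : 1 < t ^ α := one_lt_rpow ht hα
  have hft : f 1 ≤ f t := hmono self_mem_Ici ht.le ht.le
  rw [Function.comp_apply, geomWeight, ← div_eq_mul_inv]
  gcongr
  nlinarith

lemma tendsto_geomWeight_atTop (hα : 0 < α) (hmono : MonotoneOn f (Ici 1))
    (hunb : ∀ M : ℝ, ∃ t, 1 ≤ t ∧ M < f t) (hf1 : 0 < f 1) :
    Tendsto (geomWeight α f) atTop atTop := by
  have hf : Tendsto f atTop atTop := tendsto_atTop_atTop.2 fun M => by
    obtain ⟨t₀, ht₀, hM⟩ := hunb M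
    exact ⟨t₀, fun t ht => hM.le.trans (hmono ht₀ (ht₀.trans ht) ht)⟩
  refine tendsto_atTop_mono' _ ?_ hf
  filter_upwards [eventually_gt_atTop 1] with t ht
  have hft : 0 < f t := hf1.trans_le (hmono self_mem_Ici ht.le ht.le)
  rw [geomWeight, le_div_iff₀ (sub_pos.2 (one_lt_rpow ht hα))]
  nlinarith

lemma exists_isMinOn_geomWeight (hα : 0 < α) (hmono : MonotoneOn f (Ici 1))
    (hcont : ContinuousOn f (Ici 1)) (hunb : ∀ M : ℝ, ∃ t, 1 ≤ t ∧ M < f t) (hf1 : 0 < f 1) :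
    ∃ q ∈ Ioi 1, IsMinOn (geomWeight α f) (Ioi 1) q :=
  (continuousOn_geomWeight hα hcont).exists_isMinOn_Ioi
    (tendsto_geomWeight_nhdsGT_one hα hmono hf1) (tendsto_geomWeight_atTop hα hmono hunb hf1)

lemma mul_one_sub_rpow_neg_le_of_le_geomWeight (hα : 0 < α) (hf1 : 0 ≤ f 1) {m : ℝ}
    (hm : ∀ t ∈ Ioi 1, m ≤ geomWeight α f t) {t : ℝ} (ht : 1 ≤ t) :
    m * (1 - t ^ (-α)) ≤ f t := by
  rcases ht.eq_or_lt with rfl | ht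
  · simpa using hf1
  rw [← geomWeight_mul_one_sub_rpow_neg (f := f) hα ht]
  exact mul_le_mul_of_nonneg_right (hm t ht)
    (sub_nonneg.2 (rpow_le_one_of_one_le_of_nonpos ht.le (neg_nonpos.2 hα.le)))

lemma mul_rpow_neg_sub_le_edgeWeight {m : ℝ} (hkey : ∀ t, 1 ≤ t → m * (1 - t ^ (-α)) ≤ f t)
    {i j : ℝ} (hi : 0 < i) (hij : i ≤ j) :
    m * (i ^ (-α) - j ^ (-α)) ≤ edgeWeight α f i j := by
  have hsplit : j ^ (-α) = i ^ (-α) * (j / i) ^ (-α) := by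
    rw [div_rpow (hi.le.trans hij) hi.le, mul_div_cancel₀ _ (rpow_pos_of_pos hi _).ne']
  calc m * (i ^ (-α) - j ^ (-α)) = i ^ (-α) * (m * (1 - (j / i) ^ (-α))) := by
        rw [hsplit]; ring
    _ ≤ i ^ (-α) * f (j / i) :=
        mul_le_mul_of_nonneg_left (hkey _ ((one_le_div hi).2 hij)) (rpow_nonneg hi.le _)

lemma mul_rpow_neg_sub_le_sum_edgeWeight {m : ℝ}
    (hkey : ∀ t, 1 ≤ t → m * (1 - t ^ (-α)) ≤ f t) {a : ℕ → ℝ} (hpos : ∀ k, 0 < a k)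
    (ha : Monotone a) (N : ℕ) :
    m * (a 0 ^ (-α) - a N ^ (-α)) ≤
      ∑ k ∈ Finset.range N, edgeWeight α f (a k) (a (k + 1)) := by
  rw [← Finset.sum_range_sub' (fun k => a k ^ (-α)), Finset.mul_sum]
  exact Finset.sum_le_sum fun k _ =>
    mul_rpow_neg_sub_le_edgeWeight hkey (hpos k) (ha k.le_succ)

lemma pathWeight_eq_top_of_bddAbove (hα : 0 ≤ α) (hmono : MonotoneOn f (Ici 1)) (hf1 : 0 < f 1)
    {a : ℕ → ℝ} (hpos : ∀ k, 0 < a k) (ha : Monotone a) (hbdd : BddAbove (range a)) :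
    pathWeight α f a = ⊤ := by
  obtain ⟨B, hB⟩ := hbdd
  have hB' : ∀ k, a k ≤ B := fun k => hB (mem_range_self k)
  have hε : 0 < B ^ (-α) * f 1 := mul_pos (rpow_pos_of_pos ((hpos 0).trans_le (hB' 0)) _) hf1
  refine top_unique ?_
  calc (⊤ : ENNReal) = ∑' _ : ℕ, ENNReal.ofReal (B ^ (-α) * f 1) :=
        (ENNReal.tsum_const_eq_top_of_ne_zero (ENNReal.ofReal_pos.2 hε).ne').symm
    _ ≤ pathWeight α f a := ENNReal.tsum_le_tsum fun k => ENNReal.ofReal_le_ofReal <| by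
        have hratio : 1 ≤ a (k + 1) / a k := (one_le_div (hpos k)).2 (ha k.le_succ)
        exact mul_le_mul (rpow_le_rpow_of_nonpos (hpos k) (hB' k) (neg_nonpos.2 hα))
          (hmono self_mem_Ici hratio hratio) hf1.le (rpow_nonneg (hpos k).le _)

lemma ofReal_le_pathWeight (hα : 0 < α) (hmono : MonotoneOn f (Ici 1)) (hf1 : 0 < f 1) {m : ℝ}
    (hkey : ∀ t, 1 ≤ t → m * (1 - t ^ (-α)) ≤ f t) {a : ℕ → ℝ} (ha0 : a 0 = 1)
    (ha : Monotone a) : ENNReal.ofReal m ≤ pathWeight α f a := by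
  have hpos : ∀ k, 0 < a k := fun k => one_pos.trans_le (ha0 ▸ ha k.zero_le)
  by_cases hbdd : BddAbove (range a)
  · simp [pathWeight_eq_top_of_bddAbove hα.le hmono hf1 hpos ha hbdd]
  have hlim : Tendsto (fun N => ENNReal.ofReal (m * (a 0 ^ (-α) - a N ^ (-α)))) atTop
      (𝓝 (ENNReal.ofReal m)) := by
    have h := (tendsto_rpow_neg_atTop hα).comp (tendsto_atTop_atTop_of_monotone' ha hbdd)
    simpa [ha0, Function.comp_def] using (ENNReal.continuous_ofReal.tendsto _).comp
      ((tendsto_const_nhds (x := m)).mul (tendsto_const_nhds (x := (1 : ℝ)).sub h))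
  refine le_of_tendsto' hlim fun N => ?_
  calc ENNReal.ofReal (m * (a 0 ^ (-α) - a N ^ (-α)))
      ≤ ENNReal.ofReal (∑ k ∈ Finset.range N, edgeWeight α f (a k) (a (k + 1))) :=
        ENNReal.ofReal_le_ofReal (mul_rpow_neg_sub_le_sum_edgeWeight hkey hpos ha N)
    _ ≤ ∑ k ∈ Finset.range N, ENNReal.ofReal (edgeWeight α f (a k) (a (k + 1))) :=
        Finset.le_sum_of_subadditive _ ENNReal.ofReal_zero.le (fun _ _ => ENNReal.ofReal_add_le) _ _
    _ ≤ pathWeight α f a := ENNReal.sum_le_tsum _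

lemma hasSum_edgeWeight_geometric (hα : 0 < α) {q : ℝ} (hq : 1 < q) :
    HasSum (fun k : ℕ => edgeWeight α f (q ^ k) (q ^ (k + 1))) (geomWeight α f q) := by
  have hq0 : 0 < q := one_pos.trans hq
  have hterm : ∀ k : ℕ, edgeWeight α f (q ^ k) (q ^ (k + 1)) = (q ^ (-α)) ^ k * f q := fun k => by
    rw [edgeWeight, pow_succ, mul_div_cancel_left₀ _ (pow_pos hq0 k).ne', ← rpow_natCast,
      ← rpow_mul hq0.le, mul_comm (k : ℝ), rpow_mul hq0.le, rpow_natCast]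
  have hr : q ^ (-α) < 1 := rpow_lt_one_of_one_lt_of_neg hq (neg_neg_of_pos hα)
  have hsum : (1 - q ^ (-α))⁻¹ * f q = geomWeight α f q := by
    rw [← geomWeight_mul_one_sub_rpow_neg (f := f) hα hq, mul_comm,
      mul_inv_cancel_right₀ (sub_pos.2 hr).ne']
  rw [← hsum]
  simpa only [hterm] using
    (hasSum_geometric_of_lt_one (rpow_nonneg hq0.le _) hr).mul_right (f q)
end

theorem stmt_12 (α : ℝ) (hα : 0 < α) (f : ℝ → ℝ)
    (hmono : MonotoneOn f (Set.Ici 1)) (hcont : ContinuousOn f (Set.Ici 1))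
    (hunb : ∀ M : ℝ, ∃ t, 1 ≤ t ∧ M < f t) (hf1 : 0 < f 1) :
    ∃ q : ℝ, 1 < q ∧
      (∀ t : ℝ, 1 < t → q ^ α * f q / (q ^ α - 1) ≤ t ^ α * f t / (t ^ α - 1)) ∧
      (∀ a : ℕ → ℝ, a 0 = 1 → Monotone a →
        ENNReal.ofReal (q ^ α * f q / (q ^ α - 1)) ≤
          ∑' k : ℕ, ENNReal.ofReal ((a k) ^ (-α) * f (a (k+1) / a k))) ∧
      ∑' k : ℕ, ((q ^ (k : ℕ) : ℝ) ^ (-α) * f ((q ^ (k+1 : ℕ)) / (q ^ (k : ℕ))))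
        = q ^ α * f q / (q ^ α - 1) := by
  obtain ⟨q, hq, hmin⟩ := exists_isMinOn_geomWeight hα hmono hcont hunb hf1
  have hkey : ∀ t, 1 ≤ t → geomWeight α f q * (1 - t ^ (-α)) ≤ f t :=
    fun t => mul_one_sub_rpow_neg_le_of_le_geomWeight hα hf1.le hmin
  exact ⟨q, hq, fun t ht => hmin ht, fun a ha0 ha => ofReal_le_pathWeight hα hmono hf1 hkey ha0 ha,
    (hasSum_edgeWeight_geometric hα hq).tsum_eq⟩
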